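/- Let (x*, y*) satisfy A_ff x* + A_fs y* = b1 and A_sf x* + A_ss y* = b2, and let (x_p*, y_p*) ∈ X × Y satisfy the projected equations Π_X(A_ff x_p* + A_fs y_p* − b1) = 0 and Π_Y(A_sf x_p* + A_ss y_p* − b2) = 0. Suppose U_Yᵀ A_ss U_Y is invertible and set c5 := U_Y (U_Yᵀ A_ss U_Y)^{-1} U_Yᵀ. Then the approximation-error identity y_p* − y* = (I − c5 A_ss)(Π_Y y* − y*) − c5 A_sf (x_p* − x*) holds. -/

import Mathlib

/-! With `c₅ = U_Y (U_Yᵀ A_ss U_Y)⁻¹ U_Yᵀ`, the map `c₅ A_ss` is an oblique projection onto `Y`, so it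
fixes `y_p*` and `Π_Y y*`, and `c₅ = c₅ Π_Y` annihilates the projected residual
`A_sf (x_p* - x*) + A_ss (y_p* - y*)`. Hence `c₅ A_sf (x_p* - x*) = c₅ A_ss y* - y_p*`, and the
identity is a rearrangement. -/

open Matrix MeasureTheory Finset
open scoped BigOperators

noncomputable section
namespace TTSA

abbrev E (n : ℕ) : Type := EuclideanSpace ℝ (Fin n)

def mv {k l : ℕ} (M : Matrix (Fin k) (Fin l) ℝ) (x : E l) : E k :=
  Matrix.toEuclideanLin M x

def specNorm {k l : ℕ} (M : Matrix (Fin k) (Fin l) ℝ) : ℝ :=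
  ‖LinearMap.toContinuousLinearMap (Matrix.toEuclideanLin M)‖

def sigmaMin {k : ℕ} (M : Matrix (Fin k) (Fin k) ℝ) : ℝ :=
  sInf ((fun v : E k => ‖mv M v‖) '' {v | ‖v‖ = 1})

def resolvent {k l : ℕ} (U : Matrix (Fin k) (Fin l) ℝ) (A : Matrix (Fin k) (Fin k) ℝ) :
    Matrix (Fin k) (Fin k) ℝ :=
  U * (Uᵀ * A * U)⁻¹ * Uᵀ

section MatrixVector

variable {k l p : ℕ}

lemma mv_mv (A : Matrix (Fin k) (Fin l) ℝ) (B : Matrix (Fin l) (Fin p) ℝ) (x : E p) :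
    mv A (mv B x) = mv (A * B) x := by
  simp [mv]

lemma one_mv (x : E k) : mv (1 : Matrix (Fin k) (Fin k) ℝ) x = x := by
  simp [mv]

lemma sub_mv (M N : Matrix (Fin k) (Fin l) ℝ) (x : E l) :
    mv (M - N) x = mv M x - mv N x := by
  simp [mv]

lemma mv_add (M : Matrix (Fin k) (Fin l) ℝ) (x y : E l) : mv M (x + y) = mv M x + mv M y :=
  map_add (Matrix.toEuclideanLin M) x y

lemma mv_sub (M : Matrix (Fin k) (Fin l) ℝ) (x y : E l) : mv M (x - y) = mv M x - mv M y :=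
  map_sub (Matrix.toEuclideanLin M) x y

lemma mv_zero (M : Matrix (Fin k) (Fin l) ℝ) : mv M (0 : E l) = 0 :=
  map_zero (Matrix.toEuclideanLin M)

end MatrixVector

section Resolvent

variable {k l : ℕ} {U : Matrix (Fin k) (Fin l) ℝ} {A : Matrix (Fin k) (Fin k) ℝ}

lemma resolvent_mul_mul_self (h : IsUnit (Uᵀ * A * U)) : resolvent U A * A * U = U := by
  have hinv : (Uᵀ * A * U)⁻¹ * (Uᵀ * A * U) = 1 :=
    Matrix.nonsing_inv_mul _ ((Matrix.isUnit_iff_isUnit_det _).mp h)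
  calc resolvent U A * A * U = U * ((Uᵀ * A * U)⁻¹ * (Uᵀ * A * U)) := by
        simp only [resolvent, Matrix.mul_assoc]
    _ = U := by rw [hinv, Matrix.mul_one]

lemma resolvent_mul_proj (hU : Uᵀ * U = 1) : resolvent U A * (U * Uᵀ) = resolvent U A := by
  simp only [resolvent, Matrix.mul_assoc, ← Matrix.mul_assoc Uᵀ U, hU, Matrix.one_mul]

lemma mv_resolvent_mul_self_of_mem_range (h : IsUnit (Uᵀ * A * U)) {y : E k}
    (hy : y ∈ Set.range (mv U)) : mv (resolvent U A * A) y = y := by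
  obtain ⟨z, rfl⟩ := hy
  rw [mv_mv, resolvent_mul_mul_self h]

lemma mv_resolvent_eq_zero_of_mv_proj_eq_zero (hU : Uᵀ * U = 1) {v : E k}
    (hv : mv (U * Uᵀ) v = 0) : mv (resolvent U A) v = 0 := by
  rw [← resolvent_mul_proj hU, ← mv_mv, hv, mv_zero]

end Resolvent

theorem slow_approximation_identity_general {n m r : ℕ}
    (Asf : Matrix (Fin m) (Fin n) ℝ) (Ass : Matrix (Fin m) (Fin m) ℝ)
    (b2 : E m)
    (UY : Matrix (Fin m) (Fin r) ℝ)
    (hUY : UYᵀ * UY = 1)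
    (xs : E n) (ys : E m)
    (hys : mv Asf xs + mv Ass ys = b2)
    (xp : E n) (yp : E m)
    (hyp : yp ∈ Set.range (mv UY))
    (hsoly : mv (UY * UYᵀ) (mv Asf xp + mv Ass yp - b2) = 0)
    (h5 : IsUnit (UYᵀ * Ass * UY)) :
    yp - ys = mv (1 - resolvent UY Ass * Ass) (mv (UY * UYᵀ) ys - ys) -
      mv (resolvent UY Ass * Asf) (xp - xs) := by
  set c5 := resolvent UY Ass
  have hres : mv c5 (mv Asf (xp - xs) + mv Ass (yp - ys)) = 0 := by
    refine mv_resolvent_eq_zero_of_mv_proj_eq_zero hUY ?_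
    rw [← hsoly, ← hys, mv_sub, mv_sub]
    congr 1
    abel
  have hfix_yp : mv (c5 * Ass) yp = yp := mv_resolvent_mul_self_of_mem_range h5 hyp
  have hfix_proj : mv (c5 * Ass) (mv (UY * UYᵀ) ys) = mv (UY * UYᵀ) ys :=
    mv_resolvent_mul_self_of_mem_range h5 ⟨_, mv_mv UY UYᵀ ys⟩
  rw [mv_add, mv_mv, mv_mv, mv_sub, mv_sub] at hres
  rw [sub_mv, one_mv, mv_sub, mv_sub, hfix_proj]
  linear_combination (norm := abel) hres - hfix_yp

/-- approximation-error identity for the slow component: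
`y_p* - y* = (I - c5 A_ss)(Π_Y y* - y*) - c5 A_sf (x_p* - x*)`,
with `c5 = resolvent U_Y A_ss`. -/
theorem slow_approximation_identity {n m d r : ℕ}
    (Aff : Matrix (Fin n) (Fin n) ℝ) (Afs : Matrix (Fin n) (Fin m) ℝ)
    (Asf : Matrix (Fin m) (Fin n) ℝ) (Ass : Matrix (Fin m) (Fin m) ℝ)
    (b1 : E n) (b2 : E m)
    (UX : Matrix (Fin n) (Fin d) ℝ) (UY : Matrix (Fin m) (Fin r) ℝ)
    (hUX : UXᵀ * UX = 1) (hUY : UYᵀ * UY = 1)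
    (xs : E n) (ys : E m)
    (hxs : mv Aff xs + mv Afs ys = b1) (hys : mv Asf xs + mv Ass ys = b2)
    (xp : E n) (yp : E m)
    (hxp : xp ∈ Set.range (mv UX)) (hyp : yp ∈ Set.range (mv UY))
    (hsolx : mv (UX * UXᵀ) (mv Aff xp + mv Afs yp - b1) = 0)
    (hsoly : mv (UY * UYᵀ) (mv Asf xp + mv Ass yp - b2) = 0)
    (h5 : IsUnit (UYᵀ * Ass * UY)) :
    yp - ys = mv (1 - resolvent UY Ass * Ass) (mv (UY * UYᵀ) ys - ys) -
      mv (resolvent UY Ass * Asf) (xp - xs) :=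
  slow_approximation_identity_general Asf Ass b2 UY hUY xs ys hys xp yp hyp hsoly h5

end TTSA
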